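/- For all n ≥ 2, the values b(n-1, j) are non-increasing in j for 1 ≤ j ≤ n-1; i.e., b(n-1, j) ≤ b(n-1, j-1) for 2 ≤ j ≤ n-1. -/

import Mathlib

/-- `F n = (a n ·, b n ·, φ n)` from the recursive construction;
    `φ 1 := 1` by convention. -/
def F : ℕ → ((ℕ → ℚ) × (ℕ → ℚ) × ℚ)
  | 0 => (fun _ => 0, fun _ => 0, 1)
  | 1 => (fun j => if j = 1 then 1 else 0, fun j => if j = 1 then 1 else 0, 1)
  | (n+2) =>
      let p := F (n+1)
      let th : ℚ := 3 * p.1 (n+1)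
      let ph : ℚ := if n = 0 then 4
        else 4 * ∑ j ∈ Finset.Icc 1 (n+1), (th * p.2.1 j - 3 * p.1 j)
      (fun j => if j = n+2 then ph else 4 * p.1 j,
       fun j => if j = n+2 then 1 else (1 + th) * p.2.1 j,
       ph)

/-- coefficient `a(n,j)` -/
def a (n j : ℕ) : ℚ := (F n).1 j
/-- coefficient `b(n,j)` -/
def b (n j : ℕ) : ℚ := (F n).2.1 j
/-- `φ(n)` -/
def phi (n : ℕ) : ℚ := (F n).2.2
/-- `θ(n) = 3·a(n-1,n-1)` -/
def theta (n : ℕ) : ℚ := 3 * a (n-1) (n-1)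

/-! Each step rescales the old row of `b` by `1 + θ(n+1)` and appends the entry `1`, so `b n` stays
antitone as long as `θ(n+1) = 3·a(n,n) ≥ 0`. The nonnegativity of the diagonal `a(n,n) = φ(n)` is
proved jointly with the bounds of `CoeffBounds`: since `b(n,1) ≥ 4` and `a(n,j) ≤ a(n,n)`, every
summand of `φ(n+1)` is nonnegative and the first one alone gives `φ(n+1) ≥ 4·a(n,n)`, which is what
keeps `a(n+1,j) = 4·a(n,j)` below the new diagonal. -/

theorem theta_succ (n : ℕ) : theta (n + 1) = 3 * a n n := rfl

theorem a_succ_of_ne {n j : ℕ} (hn : 1 ≤ n) (hj : j ≠ n + 1) : a (n + 1) j = 4 * a n j := by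
  obtain ⟨m, rfl⟩ : ∃ m, n = m + 1 := ⟨n - 1, by omega⟩
  simp [a, F, hj]

theorem b_succ_of_ne {n j : ℕ} (hn : 1 ≤ n) (hj : j ≠ n + 1) :
    b (n + 1) j = (1 + theta (n + 1)) * b n j := by
  obtain ⟨m, rfl⟩ : ∃ m, n = m + 1 := ⟨n - 1, by omega⟩
  simp [a, b, theta, F, hj]

theorem a_self {n : ℕ} (hn : 1 ≤ n) : a n n = phi n := by
  obtain ⟨m, rfl⟩ : ∃ m, n = m + 1 := ⟨n - 1, by omega⟩
  cases m <;> simp [a, phi, F]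

theorem b_self {n : ℕ} (hn : 1 ≤ n) : b n n = 1 := by
  obtain ⟨m, rfl⟩ : ∃ m, n = m + 1 := ⟨n - 1, by omega⟩
  cases m <;> simp [b, F]

theorem phi_two : phi 2 = 4 := by
  simp [phi, F]

theorem phi_succ {n : ℕ} (hn : 2 ≤ n) :
    phi (n + 1) = 4 * ∑ j ∈ Finset.Icc 1 n, (theta (n + 1) * b n j - 3 * a n j) := by
  obtain ⟨m, rfl⟩ : ∃ m, n = m + 2 := ⟨n - 2, by omega⟩
  simp [a, b, phi, theta, F]

structure CoeffBounds (n : ℕ) : Prop where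
  four_le_b : ∀ j, 1 ≤ j → j < n → 4 ≤ b n j
  a_nonneg : ∀ j, 1 ≤ j → j ≤ n → 0 ≤ a n j
  a_le_a_self : ∀ j, 1 ≤ j → j ≤ n → a n j ≤ a n n
  one_le_a_self : 1 ≤ a n n

theorem coeffBounds_one : CoeffBounds 1 where
  four_le_b _ _ _ := by omega
  a_nonneg j _ _ := by interval_cases j; simp [a, F]
  a_le_a_self j _ _ := by interval_cases j; rfl
  one_le_a_self := by simp [a, F]

namespace CoeffBounds

variable {n : ℕ}

theorem one_le_b (h : CoeffBounds n) {j : ℕ} (hj : 1 ≤ j) (hjn : j ≤ n) : 1 ≤ b n j := by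
  rcases hjn.lt_or_eq with hlt | rfl
  · linarith [h.four_le_b j hj hlt]
  · rw [b_self hj]

theorem four_mul_a_self_le_phi (h : CoeffBounds n) (hn : 1 ≤ n) : 4 * a n n ≤ phi (n + 1) := by
  rcases hn.lt_or_eq with hn | rfl
  · set A := a n n
    have hA := h.one_le_a_self
    have hterm : ∀ j ∈ Finset.Icc 1 n, 0 ≤ theta (n + 1) * b n j - 3 * a n j := by
      intro j hj
      rw [Finset.mem_Icc] at hj
      have := h.one_le_b hj.1 hj.2
      have := h.a_le_a_self j hj.1 hj.2
      rw [theta_succ]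
      nlinarith
    have hfirst : 9 * A ≤ theta (n + 1) * b n 1 - 3 * a n 1 := by
      have := h.four_le_b 1 le_rfl hn
      have := h.a_le_a_self 1 le_rfl hn.le
      rw [theta_succ]
      nlinarith
    have := Finset.single_le_sum hterm (Finset.left_mem_Icc.mpr hn.le)
    rw [phi_succ hn]
    linarith
  · rw [phi_two]
    simp [a, F]

theorem succ (h : CoeffBounds n) (hn : 1 ≤ n) : CoeffBounds (n + 1) := by
  have hA := h.one_le_a_self
  have hphi := h.four_mul_a_self_le_phi hn
  have hdiag : a (n + 1) (n + 1) = phi (n + 1) := a_self (by omega)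
  refine ⟨fun j hj hjn => ?_, fun j hj hjn => ?_, fun j hj hjn => ?_, by linarith⟩
  · rw [b_succ_of_ne hn hjn.ne, theta_succ]
    have := h.one_le_b hj (by omega)
    nlinarith
  · rcases hjn.lt_or_eq with hjn | rfl
    · rw [a_succ_of_ne hn hjn.ne]
      linarith [h.a_nonneg j hj (by omega)]
    · linarith
  · rcases hjn.lt_or_eq with hjn | rfl
    · rw [a_succ_of_ne hn hjn.ne, hdiag]
      linarith [h.a_le_a_self j hj (by omega)]
    · rfl

end CoeffBounds

theorem coeffBounds {n : ℕ} (hn : 1 ≤ n) : CoeffBounds n := by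
  induction n, hn using Nat.le_induction with
  | base => exact coeffBounds_one
  | succ n hn ih => exact ih.succ hn

theorem antitoneOn_b_succ {n : ℕ} (hn : 1 ≤ n) (hb : AntitoneOn (b n) (Set.Icc 1 n))
    (hθ : 0 ≤ theta (n + 1)) : AntitoneOn (b (n + 1)) (Set.Icc 1 (n + 1)) := by
  intro i hi j hj hij
  rcases hj.2.lt_or_eq with hjn | rfl
  · rw [b_succ_of_ne hn hjn.ne, b_succ_of_ne hn (by omega)]
    exact mul_le_mul_of_nonneg_left (hb ⟨hi.1, by omega⟩ ⟨hj.1, by omega⟩ hij) (by linarith)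
  · rcases hij.lt_or_eq with hij | rfl
    · have hbi : 1 ≤ b n i := b_self hn ▸ hb ⟨hi.1, by omega⟩ ⟨hn, le_rfl⟩ (by omega)
      rw [b_succ_of_ne hn hij.ne, b_self (by omega)]
      nlinarith
    · rfl

theorem antitoneOn_b {n : ℕ} (hn : 1 ≤ n) : AntitoneOn (b n) (Set.Icc 1 n) := by
  induction n, hn using Nat.le_induction with
  | base =>
    intro i hi j hj _
    rw [Set.Icc_self, Set.mem_singleton_iff] at hi hj
    rw [hi, hj]
  | succ n hn ih =>
    refine antitoneOn_b_succ hn ih ?_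
    rw [theta_succ]
    linarith [(coeffBounds hn).one_le_a_self]

theorem b_antitone_general (n : ℕ) :
    ∀ j : ℕ, 2 ≤ j → j ≤ n - 1 → b (n-1) j ≤ b (n-1) (j-1) := by
  intro j hj hjn
  exact antitoneOn_b (by omega) ⟨by omega, by omega⟩ ⟨by omega, hjn⟩ (by omega)

theorem b_antitone (n : ℕ) (hn : 2 ≤ n) :
    ∀ j : ℕ, 2 ≤ j → j ≤ n - 1 → b (n-1) j ≤ b (n-1) (j-1) :=
  b_antitone_general n
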